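/- arXiv:1402.3610 — 2 statements merged into one kernel-verified Lean document; each statement's English description precedes it below -/
import Mathlib

section
/- If f is a budget-balanced distribution rule for a welfare function W (with W(∅) = 0) on a finite player set N that guarantees the existence of a pure Nash equilibrium in all games in G(N, f, W), then for every S ⊆ N and every i ∈ N^W(S), f(i, S) = f(i, N^W(S)). -/
open scoped BigOperators Classical

namespace CostSharing

/-- A welfare sharing game on player set `N`: a finite resource set, a nonempty
finite action set (a collection of subsets of resources) for each player, and a
local welfare function at each resource. -/
structure Game (N : Type) [Fintype N] [DecidableEq N] where
  R : Type
  [finR : Fintype R]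
  [decR : DecidableEq R]
  act : N → Finset (Finset R)
  act_nonempty : ∀ i, (act i).Nonempty
  Wr : R → Finset N → ℝ

attribute [instance] Game.finR Game.decR

variable {N : Type} [Fintype N] [DecidableEq N]

/-- `{a}_r`: the set of players choosing resource `r` in profile `a`. -/
def playersAt {G : Game N} (a : N → Finset G.R) (r : G.R) : Finset N :=
  Finset.univ.filter fun i => r ∈ a i

/-- Player `i`'s utility, where `fD` assigns to each local welfare function its
local distribution rule (so resources with identical welfare functions have
identical distribution rules). -/
noncomputable def utility (G : Game N) (fD : (Finset N → ℝ) → N → Finset N → ℝ)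
    (a : N → Finset G.R) (i : N) : ℝ :=
  ∑ r ∈ a i, fD (G.Wr r) i (playersAt a r)

/-- Pure Nash equilibrium. -/
def IsPNE (G : Game N) (fD : (Finset N → ℝ) → N → Finset N → ℝ)
    (a : N → Finset G.R) : Prop :=
  (∀ i, a i ∈ G.act i) ∧
    ∀ i : N, ∀ b ∈ G.act i,
      utility G fD (Function.update a i b) i ≤ utility G fD a i

/-- Every game in the class `G(N, f^𝕎, 𝕎)` possesses a pure Nash equilibrium. -/
def GuaranteesPNE (𝕎 : Set (Finset N → ℝ))
    (fD : (Finset N → ℝ) → N → Finset N → ℝ) : Prop :=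
  ∀ G : Game N, (∀ r : G.R, G.Wr r ∈ 𝕎) → ∃ a, IsPNE G fD a

/-- Every game in the single-welfare-function class `G(N, f, W)` possesses a
pure Nash equilibrium. -/
def GuaranteesPNE1 (W : Finset N → ℝ) (f : N → Finset N → ℝ) : Prop :=
  ∀ G : Game N, (∀ r : G.R, G.Wr r = W) → ∃ a, IsPNE G (fun _ => f) a

/-- A distribution rule allocates nothing to absent players. -/
def DistRule (f : N → Finset N → ℝ) : Prop :=
  ∀ (i : N) (S : Finset N), i ∉ S → f i S = 0

/-- Budget balance: `∑_{i∈S} f(i,S) = W(S)`. -/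
def BudgetBalanced (W : Finset N → ℝ) (f : N → Finset N → ℝ) : Prop :=
  ∀ S : Finset N, ∑ i ∈ S, f i S = W S

/-- The inclusion (unanimity) welfare function `W^T`. -/
def unanimity (T S : Finset N) : ℝ := if T ⊆ S then 1 else 0

/-- The basis coefficient `q^W_T` of `W` on the unanimity basis (Möbius inversion). -/
def coeff (W : Finset N → ℝ) (T : Finset N) : ℝ :=
  ∑ R ∈ T.powerset, (-1 : ℝ) ^ (T.card - R.card) * W R

/-- The support `𝒯^W` of the basis representation of `W`. -/
noncomputable def supp (W : Finset N → ℝ) : Finset (Finset N) :=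
  Finset.univ.filter fun T => coeff W T ≠ 0

/-- `𝒯^W(S)`: the contributing coalitions within `S`. -/
noncomputable def suppIn (W : Finset N → ℝ) (S : Finset N) : Finset (Finset N) :=
  (supp W).filter (· ⊆ S)

/-- `N^W(S)`: the contributing players within `S`. -/
noncomputable def contributors (W : Finset N → ℝ) (S : Finset N) : Finset N :=
  (suppIn W S).biUnion id

/-- A weight system `ω = (λ, Σ)`: strictly positive player weights together with
an ordered partition of `N`. -/
structure WeightSystem (N : Type) [Fintype N] [DecidableEq N] where
  lam : N → ℝ
  lam_pos : ∀ i, 0 < lam i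
  m : ℕ
  part : Fin m → Finset N
  part_nonempty : ∀ k, (part k).Nonempty
  part_disjoint : ∀ k l, k ≠ l → Disjoint (part k) (part l)
  part_covers : ∀ i : N, ∃ k, i ∈ part k

/-- The index of the block of the ordered partition containing player `i`. -/
noncomputable def WeightSystem.idx (ω : WeightSystem N) (i : N) : Fin ω.m :=
  (ω.part_covers i).choose

/-- `T̄ = T ∩ S_k` where `k = min {j : S_j ∩ T ≠ ∅}`. -/
noncomputable def WeightSystem.bar (ω : WeightSystem N) (T : Finset N) : Finset N :=
  T.filter fun i => ∀ j ∈ T, ω.idx i ≤ ω.idx j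

/-- The generalized weighted Shapley value basis rule `f^T_{GWSV}[ω]`. -/
noncomputable def fGWSVbasis (ω : WeightSystem N) (T : Finset N) (i : N)
    (S : Finset N) : ℝ :=
  if i ∈ ω.bar T ∧ T ⊆ S then ω.lam i / ∑ j ∈ ω.bar T, ω.lam j else 0

/-- The generalized weighted marginal contribution basis rule `f^T_{GWMC}[ω]`. -/
noncomputable def fGWMCbasis (ω : WeightSystem N) (T : Finset N) (i : N)
    (S : Finset N) : ℝ :=
  if i ∈ ω.bar T ∧ T ⊆ S then ω.lam i else 0

/-- The generalized weighted Shapley value distribution rule `f^{W'}_{GWSV}[ω]`. -/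
noncomputable def fGWSV (ω : WeightSystem N) (W' : Finset N → ℝ) (i : N)
    (S : Finset N) : ℝ :=
  ∑ T ∈ supp W', coeff W' T * fGWSVbasis ω T i S

/-- The generalized weighted marginal contribution distribution rule
`f^{W''}_{GWMC}[ω]`. -/
noncomputable def fGWMC (ω : WeightSystem N) (W'' : Finset N → ℝ) (i : N)
    (S : Finset N) : ℝ :=
  ∑ T ∈ supp W'', coeff W'' T * fGWMCbasis ω T i S

/-- The recursively defined basis distribution rules `f^T` of a distribution
rule `f` for `W` (recursion along the min-partition of `(𝒯^W, ⊆)`). -/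
noncomputable def basisRule (W : Finset N → ℝ) (f : N → Finset N → ℝ)
    (T : Finset N) (i : N) (S : Finset N) : ℝ :=
  if T ⊆ S then
    (1 / coeff W T) *
      (f i T - ∑ T' ∈ ((suppIn W T).erase T).attach,
        coeff W T'.1 * basisRule W f T'.1 i S)
  else 0
termination_by T.card
decreasing_by
  have h := T'.2
  simp only [Finset.mem_erase, suppIn, Finset.mem_filter] at h
  exact Finset.card_lt_card (Finset.ssubset_iff_subset_ne.mpr ⟨h.2.2, h.1⟩)

/-!
Strong induction on `S`. A player `j ∈ S ∖ N^W(S)` is handled by a two-resource game in which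
`j` and some `m ∈ S` each pick one resource, the rest of `S` sitting on both: an equilibrium forces
`f(j,S)` and `f(m,S) - f(m,S∖{j})` to have the same sign, and these quantities, summed over `m`,
give `W(S) - W(S∖{j}) = 0`, so `f(j,S) = 0`. For contributors, a four-resource matching-pennies
game shows that the deviations `f(i,S) - f(i,N^W(S))` have pairwise the same sign, while budget
balance makes them sum to zero; hence they all vanish.
-/

open Finset

theorem sum_Icc_neg_one_pow_card_sub {α : Type*} [DecidableEq α] {R X : Finset α} (h : R ⊆ X) :
    ∑ T ∈ Icc R X, (-1 : ℝ) ^ (T.card - R.card) = if R = X then 1 else 0 := by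
  have hdisj : ∀ U ∈ (X \ R).powerset, Disjoint R U := fun U hU =>
    disjoint_sdiff.mono_right (mem_powerset.1 hU)
  have hRX : X \ R = ∅ ↔ R = X := by
    rw [sdiff_eq_empty_iff_subset]; exact ⟨fun h' => subset_antisymm h h', fun e => e ▸ le_rfl⟩
  rw [Icc_eq_image_powerset h, sum_image fun U hU V hV hUV => by
    rw [← union_sdiff_cancel_left (hdisj U hU), ← union_sdiff_cancel_left (hdisj V hV)]
    exact congrArg (· \ R) hUV]
  have hcard : ∀ U ∈ (X \ R).powerset, (R ∪ U).card - R.card = U.card := fun U hU => by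
    rw [card_union_of_disjoint (hdisj U hU)]
    omega
  rw [sum_congr rfl fun U hU => by rw [hcard U hU], ← if_congr hRX rfl rfl]
  exact_mod_cast sum_powerset_neg_one_pow_card

theorem sum_coeff_powerset {α : Type} [DecidableEq α] (W : Finset α → ℝ) (X : Finset α) :
    ∑ T ∈ X.powerset, coeff W T = W X := by
  simp only [coeff]
  rw [sum_comm' (t' := X.powerset) (s' := fun R => Icc R X) (by
    intro T R; simp only [mem_powerset, mem_Icc]; grind)]
  rw [sum_congr rfl fun R hR => by
    rw [← sum_mul, sum_Icc_neg_one_pow_card_sub (mem_powerset.1 hR)]]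
  simp only [ite_mul, one_mul, zero_mul, sum_ite_eq', mem_powerset_self, if_true]

theorem sum_coeff_suppIn (W : Finset N → ℝ) (X : Finset N) :
    ∑ T ∈ suppIn W X, coeff W T = W X := by
  rw [← sum_coeff_powerset W X]
  refine sum_subset (fun T hT => ?_) (fun T hT hT' => ?_)
  · simp only [suppIn, mem_filter] at hT
    exact mem_powerset.2 hT.2
  · simpa [suppIn, supp, mem_powerset.1 hT] using hT'

theorem mem_contributors {W : Finset N → ℝ} {S : Finset N} {i : N} :
    i ∈ contributors W S ↔ ∃ T ∈ supp W, T ⊆ S ∧ i ∈ T := by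
  simp [contributors, suppIn, and_assoc]

theorem contributors_subset (W : Finset N → ℝ) (S : Finset N) : contributors W S ⊆ S := by
  intro i hi
  obtain ⟨T, -, hTS, hiT⟩ := mem_contributors.1 hi
  exact hTS hiT

theorem contributors_mono (W : Finset N → ℝ) {X Y : Finset N} (h : Y ⊆ X) :
    contributors W Y ⊆ contributors W X := by
  intro i hi
  obtain ⟨T, hT, hTY, hiT⟩ := mem_contributors.1 hi
  exact mem_contributors.2 ⟨T, hT, hTY.trans h, hiT⟩

theorem suppIn_eq_of_contributors_subset {W : Finset N → ℝ} {X Y : Finset N} (hYX : Y ⊆ X)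
    (h : contributors W X ⊆ Y) : suppIn W Y = suppIn W X := by
  ext T
  simp only [suppIn, mem_filter, and_congr_right_iff]
  refine fun hT => ⟨fun hTY => hTY.trans hYX, fun hTX => fun i hi => h ?_⟩
  exact mem_contributors.2 ⟨T, hT, hTX, hi⟩

theorem contributors_eq_of_contributors_subset {W : Finset N → ℝ} {X Y : Finset N}
    (hYX : Y ⊆ X) (h : contributors W X ⊆ Y) : contributors W Y = contributors W X := by
  rw [contributors, contributors, suppIn_eq_of_contributors_subset hYX h]

theorem apply_eq_of_contributors_subset {W : Finset N → ℝ} {X Y : Finset N}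
    (hYX : Y ⊆ X) (h : contributors W X ⊆ Y) : W Y = W X := by
  rw [← sum_coeff_suppIn W Y, ← sum_coeff_suppIn W X, suppIn_eq_of_contributors_subset hYX h]

theorem eq_zero_of_add_sum_eq_zero_of_mul_nonneg {R ι : Type*} [CommRing R] [LinearOrder R]
    [IsStrictOrderedRing R] {s : Finset ι} {x : R} {y : ι → R}
    (hsum : x + ∑ k ∈ s, y k = 0) (h : ∀ k ∈ s, 0 ≤ x * y k) : x = 0 := by
  have hxy : 0 ≤ x * ∑ k ∈ s, y k := mul_sum s y x ▸ sum_nonneg h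
  rw [eq_neg_of_add_eq_zero_right hsum] at hxy
  nlinarith [mul_self_nonneg x]


theorem insert_erase_erase {α : Type*} [DecidableEq α] {S : Finset α} {x y : α} (hx : x ∈ S)
    (hxy : x ≠ y) : insert x ((S.erase x).erase y) = S.erase y := by
  rw [erase_right_comm, insert_erase (mem_erase.2 ⟨hxy, hx⟩)]

theorem insert_insert_erase_erase {α : Type*} [DecidableEq α] {S : Finset α} {x y : α}
    (hx : x ∈ S) (hy : y ∈ S) (hxy : x ≠ y) : insert x (insert y ((S.erase x).erase y)) = S := by
  rw [insert_erase (mem_erase.2 ⟨hxy.symm, hy⟩), insert_erase hx]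

section Duel

variable {R : Type} [Fintype R] [DecidableEq R]

def duelLoad {α ρ : Type*} [DecidableEq α] [DecidableEq ρ] (base : ρ → Finset α) (x y : α)
    (Bx By : Finset ρ) (r : ρ) : Finset α :=
  (if r ∈ Bx then insert x else id) (if r ∈ By then insert y (base r) else base r)

theorem mem_duelLoad {α ρ : Type*} [DecidableEq α] [DecidableEq ρ] {base : ρ → Finset α}
    {x y i : α} {Bx By : Finset ρ} {r : ρ} :
    i ∈ duelLoad base x y Bx By r ↔ (i = x ∧ r ∈ Bx) ∨ (i = y ∧ r ∈ By) ∨ i ∈ base r := by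
  unfold duelLoad; split_ifs <;> simp [*]

abbrev duelGame (W : Finset N → ℝ) (base : R → Finset N) (x y : N) (Ax Ay : Bool → Finset R) :
    Game N where
  R := R
  act i := if i = x then univ.image Ax else if i = y then univ.image Ay
    else {univ.filter fun r => i ∈ base r}
  act_nonempty i := by split_ifs <;> simp
  Wr _ := W

variable {W : Finset N → ℝ} {base : R → Finset N} {x y : N} {Ax Ay : Bool → Finset R}

theorem utility_duelGame (f : N → Finset N → ℝ) (hxy : x ≠ y) (hx : ∀ r, x ∉ base r)
    (hy : ∀ r, y ∉ base r) {a : N → Finset R}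
    (ha : ∀ i, i ≠ x → i ≠ y → a i = univ.filter fun r => i ∈ base r) (i : N) :
    utility (duelGame W base x y Ax Ay) (fun _ => f) a i
      = ∑ r ∈ a i, f i (duelLoad base x y (a x) (a y) r) := by
  refine sum_congr rfl fun r _ => congrArg (f i) ?_
  ext k
  simp only [playersAt, mem_filter, mem_univ, true_and, mem_duelLoad]
  by_cases hkx : k = x
  · subst hkx; simp [hx, hxy]
  by_cases hky : k = y
  · subst hky; simp [hy, hkx]
  · simp [hkx, hky, ha k hkx hky]

theorem GuaranteesPNE1.exists_duel_stable {f : N → Finset N → ℝ} (hPNE : GuaranteesPNE1 W f)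
    (hxy : x ≠ y) (hx : ∀ r, x ∉ base r) (hy : ∀ r, y ∉ base r) :
    ∃ s t : Bool,
      ∑ r ∈ Ax !s, f x (duelLoad base x y (Ax !s) (Ay t) r)
          ≤ ∑ r ∈ Ax s, f x (duelLoad base x y (Ax s) (Ay t) r) ∧
        ∑ r ∈ Ay !t, f y (duelLoad base x y (Ax s) (Ay !t) r)
          ≤ ∑ r ∈ Ay t, f y (duelLoad base x y (Ax s) (Ay t) r) := by
  obtain ⟨a, hact, hstable⟩ := hPNE (duelGame W base x y Ax Ay) fun _ => rfl
  have hactx := hact x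
  have hacty := hact y
  simp only [↓reduceIte, if_neg hxy.symm] at hactx hacty
  obtain ⟨s, -, hs⟩ := mem_image.1 hactx
  obtain ⟨t, -, ht⟩ := mem_image.1 hacty
  have hfix : ∀ i, i ≠ x → i ≠ y → a i = univ.filter fun r => i ∈ base r := fun i hix hiy => by
    simpa [hix, hiy] using hact i
  refine ⟨s, t, ?_, ?_⟩
  · have h := hstable x (Ax !s) (by simpa using mem_image_of_mem Ax (mem_univ !s))
    rw [utility_duelGame f hxy hx hy hfix, utility_duelGame f hxy hx hy fun i hix hiy =>
      (Function.update_of_ne hix _ a).trans (hfix i hix hiy)] at h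
    simpa [Function.update_of_ne hxy.symm, hs, ht] using h
  · have h := hstable y (Ay !t) (by simpa [hxy.symm] using mem_image_of_mem Ay (mem_univ !t))
    rw [utility_duelGame f hxy hx hy hfix, utility_duelGame f hxy hx hy fun i hix hiy =>
      (Function.update_of_ne hiy _ a).trans (hfix i hix hiy)] at h
    simpa [Function.update_of_ne hxy, hs, ht] using h

theorem GuaranteesPNE1.duel_sub_mul_sub_nonneg {f : N → Finset N → ℝ}
    (hPNE : GuaranteesPNE1 W f) (hxy : x ≠ y) (hx : ∀ r, x ∉ base r) (hy : ∀ r, y ∉ base r)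
    {A B C D : ℝ}
    (hux : ∀ s t, ∑ r ∈ Ax s, f x (duelLoad base x y (Ax s) (Ay t) r) = if s = t then A else B)
    (huy : ∀ s t, ∑ r ∈ Ay t, f y (duelLoad base x y (Ax s) (Ay t) r) = if s = t then C else D) :
    0 ≤ (A - B) * (C - D) := by
  obtain ⟨s, t, hsx, hty⟩ := hPNE.exists_duel_stable (Ax := Ax) (Ay := Ay) hxy hx hy
  rw [hux, hux] at hsx
  rw [huy, huy] at hty
  cases s <;> cases t <;> simp only [Bool.not_false, Bool.not_true, reduceCtorEq,
    if_true, if_false] at hsx hty <;> nlinarith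

end Duel

section Shares

variable {W : Finset N → ℝ} {f : N → Finset N → ℝ}

theorem share_mul_sub_share_erase_nonneg (hPNE : GuaranteesPNE1 W f) {S : Finset N} {m j : N}
    (hm : m ∈ S) (hj : j ∈ S) (hmj : m ≠ j) (h0 : f j (S.erase m) = 0) :
    0 ≤ f j S * (f m S - f m (S.erase j)) := by
  rw [mul_comm, ← sub_zero (f j S)]
  refine hPNE.duel_sub_mul_sub_nonneg (base := fun _ : Bool => (S.erase m).erase j)
    (Ax := fun s => {s}) (Ay := fun t => {t}) hmj
    (fun _ h => notMem_erase m S (mem_of_mem_erase h)) (fun _ => notMem_erase j _)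
    (fun s t => ?_) (fun s t => ?_)
  all_goals
    rcases eq_or_ne s t with rfl | hst
    · simp only [duelLoad, sum_singleton, mem_singleton, if_true,
        insert_insert_erase_erase hm hj hmj]
  · simp only [duelLoad, sum_singleton, mem_singleton, if_true, hst, if_false,
      insert_erase_erase hm hmj]
  · simp only [duelLoad, sum_singleton, mem_singleton, if_true, hst, hst.symm, if_false, id,
      insert_erase (mem_erase.2 ⟨hmj.symm, hj⟩), h0]

theorem share_sub_mul_share_sub_nonneg (hPNE : GuaranteesPNE1 W f) {S T : Finset N}
    (hTS : T ⊆ S) {x y : N} (hx : x ∈ T) (hy : y ∈ T) (hxy : x ≠ y)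
    (hfx : f x (S.erase y) = f x (T.erase y)) (hfy : f y (S.erase x) = f y (T.erase x)) :
    0 ≤ (f x S - f x T) * (f y S - f y T) := by
  rw [← neg_mul_neg, neg_sub, neg_sub]
  -- `(false, k)` carries `T ∖ {x, y}` and `(true, k)` carries `S ∖ {x, y}`: the players meet on a
  -- `T`-resource when they choose alike and on an `S`-resource otherwise.
  simpa only [add_sub_add_right_eq_sub] using hPNE.duel_sub_mul_sub_nonneg
    (base := fun r : Bool × Bool => if r.1 then (S.erase x).erase y else (T.erase x).erase y)
    (Ax := fun s => {(false, s), (true, !s)}) (Ay := fun t => {(false, t), (true, t)})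
    (A := f x T + f x (T.erase y)) (B := f x S + f x (T.erase y))
    (C := f y T + f y (T.erase x)) (D := f y S + f y (T.erase x)) hxy
    (fun r => by split_ifs <;> exact fun h => notMem_erase x _ (mem_of_mem_erase h))
    (fun r => by split_ifs <;> exact notMem_erase y _)
    (fun s t => by
      cases s <;> cases t <;> simp [duelLoad, insert_insert_erase_erase hx hy hxy,
        insert_insert_erase_erase (hTS hx) (hTS hy) hxy, insert_erase_erase (hTS hx) hxy, hfx,
        insert_erase_erase hx hxy, add_comm])
    (fun s t => by
      cases s <;> cases t <;> simp [duelLoad, insert_erase_erase hy hxy.symm,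
        insert_erase_erase (hTS hy) hxy.symm, erase_right_comm (a := x), insert_erase hx,
        insert_erase (hTS hx), hfy, add_comm])

theorem share_eq_zero_of_notMem_contributors (hbb : BudgetBalanced W f)
    (hPNE : GuaranteesPNE1 W f) {S : Finset N} {j : N} (hj : j ∈ S)
    (hjS : j ∉ contributors W S) : f j S = 0 := by
  induction S using Finset.strongInduction generalizing j with
  | H S ih =>
  have hW : W (S.erase j) = W S := apply_eq_of_contributors_subset (erase_subset j S)
    (subset_erase.2 ⟨contributors_subset W S, hjS⟩)
  refine eq_zero_of_add_sum_eq_zero_of_mul_nonneg (s := S.erase j)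
    (y := fun m => f m S - f m (S.erase j)) ?_ fun m hm => ?_
  · rw [sum_sub_distrib, hbb, hW, ← add_sub_assoc, add_sum_erase S (f · S) hj, hbb, sub_self]
  · obtain ⟨hmj, hm⟩ := mem_erase.1 hm
    exact share_mul_sub_share_erase_nonneg hPNE hm hj hmj (ih _ (erase_ssubset hm)
      (mem_erase.2 ⟨hmj.symm, hj⟩) fun h => hjS (contributors_mono W (erase_subset m S) h))

theorem share_eq_share_contributors (hbb : BudgetBalanced W f)
    (hPNE : GuaranteesPNE1 W f) {S : Finset N} {i : N} (hi : i ∈ contributors W S) :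
    f i S = f i (contributors W S) := by
  induction S using Finset.strongInduction generalizing i with
  | H S ih =>
  set C := contributors W S
  have hCS : C ⊆ S := contributors_subset W S
  have hshare_erase : ∀ k ∈ C, ∀ l ∈ C, k ≠ l → f k (S.erase l) = f k (C.erase l) := by
    intro k hk l hl hkl
    have hsub : C.erase l ⊆ S.erase l := erase_subset_erase l hCS
    have hcontr : contributors W (C.erase l) = contributors W (S.erase l) :=
      contributors_eq_of_contributors_subset hsub (subset_erase.2
        ⟨contributors_mono W (erase_subset l S), notMem_mono (contributors_subset W _)
          (notMem_erase l S)⟩)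
    by_cases hkC : k ∈ contributors W (S.erase l)
    · rw [ih _ (erase_ssubset (hCS hl)) hkC,
        ih _ (hsub.trans_ssubset (erase_ssubset (hCS hl))) (hcontr ▸ hkC), hcontr]
    · rw [share_eq_zero_of_notMem_contributors hbb hPNE (mem_erase.2 ⟨hkl, hCS hk⟩) hkC,
        share_eq_zero_of_notMem_contributors hbb hPNE (mem_erase.2 ⟨hkl, hk⟩) (hcontr ▸ hkC)]
  rw [← sub_eq_zero]
  refine eq_zero_of_add_sum_eq_zero_of_mul_nonneg (s := C.erase i)
    (y := fun k => f k S - f k C) ?_ fun k hk => ?_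
  · rw [add_sum_erase C (fun k => f k S - f k C) hi, sum_sub_distrib, hbb C,
      sum_subset hCS fun j hj hjC => share_eq_zero_of_notMem_contributors hbb hPNE hj hjC, hbb S,
      apply_eq_of_contributors_subset hCS subset_rfl, sub_self]
  · obtain ⟨hki, hk⟩ := mem_erase.1 hk
    exact share_sub_mul_share_sub_nonneg hPNE hCS hi hk hki.symm
      (hshare_erase i hi k hk hki.symm) (hshare_erase k hk i hi hki)

end Shares

theorem contributors_shares_unchanged_general (N : Type) [Fintype N] [DecidableEq N]
    (W : Finset N → ℝ) (f : N → Finset N → ℝ)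
    (hbb : BudgetBalanced W f)
    (hPNE : GuaranteesPNE1 W f) :
    ∀ S : Finset N, ∀ i ∈ contributors W S, f i S = f i (contributors W S) :=
  fun _ _ hi => share_eq_share_contributors hbb hPNE hi

/-- **Lemma 3.** A budget-balanced distribution rule `f` for `W` that guarantees
a pure Nash equilibrium in all games in `G(N, f, W)` distributes the welfare
among the contributing players as if all other players were absent:
`f(i,S) = f(i, N^W(S))` for all `i ∈ N^W(S)`. -/
theorem contributors_shares_unchanged (N : Type) [Fintype N] [DecidableEq N]
    (hN : 1 < Fintype.card N)
    (W : Finset N → ℝ) (f : N → Finset N → ℝ)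
    (hW0 : W ∅ = 0) (hdist : DistRule f) (hbb : BudgetBalanced W f)
    (hPNE : GuaranteesPNE1 W f) :
    ∀ S : Finset N, ∀ i ∈ contributors W S, f i S = f i (contributors W S) :=
  contributors_shares_unchanged_general N W f hbb hPNE

end CostSharing
end

section
/- If f is a budget-balanced distribution rule for a welfare function W = (𝒯, Q) (with W(∅) = 0) on a finite player set N that guarantees the existence of a pure Nash equilibrium in all games in G(N, f, W), then there exists a sequence of weight systems {ω^T}_{T∈𝒯} such that f = Σ_{T∈𝒯} q_T · f^T_{GWSV}[ω^T]. -/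
open scoped BigOperators Classical

namespace CostSharing

variable {N : Type} [Fintype N] [DecidableEq N]

/-!
For `T ∈ 𝒯`, shares `f^T(i)` (`basisShare`) are defined recursively so that
`f(i, T) = ∑_{T' ∈ 𝒯, T' ⊆ T} q_{T'} f^{T'}(i)`; budget balance gives `∑_{i ∈ T} f^T(i) = 1`.
By strong induction on the coalition `O`, this identity holds at every `O` and the shares of
`O ∈ 𝒯` are nonnegative. For `i ≠ j` in `O`, let `i` and `j` play matching pennies simultaneously
on all coalitions `C ⊆ O \ {i, j}`, the pairing twisted by the sign `(-1)^|O \ {i, j} \ C|`: by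
Möbius inversion, the signed payoff differences of `i` and `j` are the residuals `ε_i`, `ε_j` of
the identity at `O`, and an equilibrium exists only if `ε_i ε_j ≥ 0`. Reals with pairwise
nonnegative products have a common sign; as the residuals sum to `0` when `O ∉ 𝒯`, and equal
`q_O f^O(i)` with `∑ f^O(i) = 1` when `O ∈ 𝒯`, they vanish, respectively the shares are
nonnegative. Finally a nonnegative share vector summing to `1` is a GWSV basis rule: its support
forms the first block, weighted by the shares.
-/

open Finset

lemma sum_Icc_neg_one_pow_card_sdiff_left {α : Type*} [DecidableEq α] {D S : Finset α}
    (h : D ⊆ S) : ∑ T ∈ Icc D S, (-1 : ℝ) ^ #(T \ D) = if D = S then 1 else 0 := by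
  have hcancel : ∀ E ∈ (S \ D).powerset, (D ∪ E) \ D = E := fun E hE =>
    union_sdiff_cancel_left (disjoint_sdiff.mono_right (mem_powerset.1 hE))
  rw [Icc_eq_image_powerset h,
    sum_image fun E hE E' hE' hEE' => by rw [← hcancel E hE, hEE', hcancel E' hE'],
    sum_congr rfl fun E hE => by rw [hcancel E hE]]
  have := congrArg (Int.cast : ℤ → ℝ) (sum_powerset_neg_one_pow_card (x := S \ D))
  push_cast at this
  rw [this]
  exact if_congr (sdiff_eq_empty_iff_subset.trans ⟨h.antisymm, fun h' => h' ▸ subset_rfl⟩) rfl rfl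

lemma sum_Icc_neg_one_pow_card_sdiff_right {α : Type*} [DecidableEq α] {D S : Finset α}
    (h : D ⊆ S) : ∑ C ∈ Icc D S, (-1 : ℝ) ^ #(S \ C) = if D = S then 1 else 0 := by
  calc ∑ C ∈ Icc D S, (-1 : ℝ) ^ #(S \ C) = ∑ E ∈ Icc ∅ (S \ D), (-1 : ℝ) ^ #(E \ ∅) := ?_
    _ = if D = S then 1 else 0 := by
      rw [sum_Icc_neg_one_pow_card_sdiff_left (empty_subset _)]
      refine if_congr ?_ rfl rfl
      rw [eq_comm, sdiff_eq_empty_iff_subset]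
      exact ⟨h.antisymm, fun h' => h' ▸ subset_rfl⟩
  refine sum_nbij' (S \ ·) (S \ ·) ?_ ?_ ?_ ?_ fun _ _ => by rw [sdiff_empty]
  · intro C hC
    rw [mem_Icc] at hC ⊢
    exact ⟨empty_subset _, sdiff_subset_sdiff subset_rfl hC.1⟩
  · intro E hE
    rw [mem_Icc] at hE ⊢
    exact ⟨subset_sdiff.2 ⟨h, disjoint_sdiff.mono_right hE.2⟩, sdiff_subset⟩
  · intro C hC
    exact Finset.sdiff_sdiff_eq_self (mem_Icc.1 hC).2
  · intro E hE
    exact Finset.sdiff_sdiff_eq_self ((mem_Icc.1 hE).2.trans sdiff_subset)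

lemma sum_powerset_coeff {α : Type} [DecidableEq α] (W : Finset α → ℝ) (S : Finset α) :
    ∑ T ∈ S.powerset, coeff W T = W S := by
  unfold coeff
  rw [sum_comm' (t' := S.powerset) (s' := fun R => Icc R S) fun T R => by
    simp only [mem_powerset, mem_Icc]
    exact ⟨fun h => ⟨⟨h.2, h.1⟩, h.2.trans h.1⟩, fun h => ⟨h.1.2, h.1.1⟩⟩]
  rw [sum_eq_single_of_mem S (mem_powerset_self S) fun R hR hRS => ?_]
  · simp
  · rw [← sum_mul, sum_congr rfl fun T hT => by rw [← card_sdiff_of_subset (mem_Icc.1 hT).1],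
      sum_Icc_neg_one_pow_card_sdiff_left (mem_powerset.1 hR), if_neg hRS, zero_mul]

section Interaction

variable {α : Type} [DecidableEq α]

/-- The Möbius-inverted marginal contribution of `j` to `i`: on combinations of `unanimity T` with
`i ∈ T` it returns the coefficient of `insert i (insert j C₀)`. -/
noncomputable def interaction (i j : α) (C₀ : Finset α) : (Finset α → ℝ) →ₗ[ℝ] ℝ :=
  ∑ C ∈ C₀.powerset, (-1 : ℝ) ^ #(C₀ \ C) •
    (LinearMap.proj (R := ℝ) (φ := fun _ => ℝ) (insert i (insert j C)) -
      LinearMap.proj (insert i C))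

lemma interaction_apply (i j : α) (C₀ : Finset α) (h : Finset α → ℝ) :
    interaction i j C₀ h =
      ∑ C ∈ C₀.powerset, (-1 : ℝ) ^ #(C₀ \ C) * (h (insert i (insert j C)) - h (insert i C)) := by
  simp [interaction]

variable {i j : α} {C₀ : Finset α}

lemma interaction_unanimity (hij : i ≠ j) (hi : i ∉ C₀) (hj : j ∉ C₀) {T : Finset α}
    (hiT : i ∈ T) (hT : T ⊆ insert i (insert j C₀)) :
    interaction i j C₀ (unanimity T) = if T = insert i (insert j C₀) then 1 else 0 := by
  rw [interaction_apply]
  by_cases hjT : j ∈ T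
  · have hsub : ∀ C, T ⊆ insert i (insert j C) ↔ (T.erase i).erase j ⊆ C := fun C => by
      rw [subset_insert_iff, subset_insert_iff]
    have hnot : ∀ C ⊆ C₀, ¬ T ⊆ insert i C := fun C hC h => by
      rcases mem_insert.1 (h hjT) with h' | h'
      · exact hij h'.symm
      · exact hj (hC h')
    have hDT : (T.erase i).erase j = C₀ ↔ T = insert i (insert j C₀) := by
      constructor
      · rintro rfl
        rw [insert_erase (mem_erase.2 ⟨Ne.symm hij, hjT⟩), insert_erase hiT]
      · rintro rfl
        rw [erase_insert (by simp [hij, hi]), erase_insert hj]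
    calc _ = ∑ C ∈ C₀.powerset,
          if (T.erase i).erase j ⊆ C then (-1 : ℝ) ^ #(C₀ \ C) else 0 :=
          sum_congr rfl fun C hC => by
            simp only [unanimity, hsub C, hnot C (mem_powerset.1 hC), if_false]
            split_ifs <;> ring
      _ = ∑ C ∈ Icc ((T.erase i).erase j) C₀, (-1 : ℝ) ^ #(C₀ \ C) := by
          rw [← sum_filter, Icc_eq_filter_powerset]
      _ = _ := by
          rw [sum_Icc_neg_one_pow_card_sdiff_right ((hsub C₀).1 hT)]
          exact if_congr hDT rfl rfl
  · rw [if_neg fun h => hjT (by rw [h]; exact mem_insert_of_mem (mem_insert_self j C₀))]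
    refine sum_eq_zero fun C _ => ?_
    have hsub : T ⊆ insert i (insert j C) ↔ T ⊆ insert i C := by
      rw [insert_comm i j, subset_insert_iff_of_notMem hjT]
    simp only [unanimity, hsub, sub_self, mul_zero]

lemma interaction_eq_apply_of_ssubset_eq_zero (hij : i ≠ j) (hi : i ∉ C₀) (hj : j ∉ C₀)
    {h : Finset α → ℝ} (hh : ∀ S ⊂ insert i (insert j C₀), h S = 0) :
    interaction i j C₀ h = h (insert i (insert j C₀)) := by
  have hiC₀ : insert i C₀ ⊂ insert i (insert j C₀) := by
    rw [insert_comm]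
    exact ssubset_insert (by simp [Ne.symm hij, hj])
  rw [interaction_apply, sum_eq_single_of_mem C₀ (mem_powerset_self _) fun C hC hne => ?_]
  · rw [Finset.sdiff_self, card_empty, pow_zero, one_mul, hh _ hiC₀, sub_zero]
  · have hCC₀ : C ⊂ C₀ := Finset.ssubset_iff_subset_ne.2 ⟨mem_powerset.1 hC, hne⟩
    obtain ⟨x, hxC₀, hxC⟩ := exists_of_ssubset hCC₀
    have hlarge : insert i (insert j C) ⊂ insert i (insert j C₀) :=
      ssubset_iff_of_subset (insert_subset_insert _ (insert_subset_insert _ hCC₀.subset)) |>.2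
        ⟨x, by simp [hxC₀],
          by simp [hxC, ne_of_mem_of_not_mem hxC₀ hi, ne_of_mem_of_not_mem hxC₀ hj]⟩
    rw [hh _ hlarge, hh _ ((insert_subset_insert i hCC₀.subset).trans_ssubset hiC₀), sub_zero,
      mul_zero]

end Interaction

lemma nonneg_of_pairwise_mul_nonneg {ι : Type*} {s : Finset ι} {x : ι → ℝ}
    (h : ∀ a ∈ s, ∀ b ∈ s, a ≠ b → 0 ≤ x a * x b) (hsum : 0 ≤ ∑ a ∈ s, x a) {a : ι}
    (ha : a ∈ s) : 0 ≤ x a := by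
  by_contra! hneg
  have hrest : ∀ b ∈ s.erase a, x b ≤ 0 := fun b hb =>
    nonpos_of_mul_nonneg_right (h a ha b (mem_of_mem_erase hb) (ne_of_mem_erase hb).symm) hneg
  rw [← add_sum_erase _ _ ha] at hsum
  linarith [sum_nonpos hrest]

lemma eq_zero_of_pairwise_mul_nonneg {ι : Type*} {s : Finset ι} {x : ι → ℝ}
    (h : ∀ a ∈ s, ∀ b ∈ s, a ≠ b → 0 ≤ x a * x b) (hsum : ∑ a ∈ s, x a = 0) {a : ι}
    (ha : a ∈ s) : x a = 0 := by
  have hneg := nonneg_of_pairwise_mul_nonneg (x := -x)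
    (fun a ha b hb hab => by simpa using h a ha b hb hab) (by simp [hsum]) ha
  exact le_antisymm (by simpa using hneg) (nonneg_of_pairwise_mul_nonneg h hsum.ge ha)

lemma mem_supp {α : Type} [Fintype α] {W : Finset α → ℝ} {T : Finset α} :
    T ∈ supp W ↔ coeff W T ≠ 0 := by
  simp [supp]

lemma mem_suppIn {W : Finset N → ℝ} {S T : Finset N} :
    T ∈ suppIn W S ↔ T ∈ supp W ∧ T ⊆ S :=
  mem_filter

lemma ssubset_of_mem_erase_suppIn {W : Finset N → ℝ} {S T : Finset N}
    (hT : T ∈ (suppIn W S).erase S) : T ⊂ S :=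
  Finset.ssubset_iff_subset_ne.2 ⟨(mem_suppIn.1 (mem_of_mem_erase hT)).2, ne_of_mem_erase hT⟩

lemma sum_suppIn_coeff (W : Finset N → ℝ) (S : Finset N) :
    ∑ T ∈ suppIn W S, coeff W T = W S := by
  have : suppIn W S = S.powerset.filter (coeff W · ≠ 0) := by
    ext T
    simp only [suppIn, supp, mem_filter, mem_univ, true_and, mem_powerset]
    tauto
  rw [this, sum_filter_ne_zero, sum_powerset_coeff]

/-- The paper's `f^T(i, S)` for `T ⊆ S`, which does not depend on `S` (cf. `basisRule`). -/
noncomputable def basisShare (W : Finset N → ℝ) (f : N → Finset N → ℝ) (T : Finset N) (i : N) :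
    ℝ :=
  (coeff W T)⁻¹ *
    (f i T - ∑ T' ∈ ((suppIn W T).erase T).attach, coeff W T'.1 * basisShare W f T'.1 i)
termination_by #T
decreasing_by exact card_lt_card (ssubset_of_mem_erase_suppIn T'.2)

noncomputable def residual (W : Finset N → ℝ) (f : N → Finset N → ℝ) (O : Finset N) (i : N) :
    ℝ :=
  f i O - ∑ T ∈ (suppIn W O).erase O, coeff W T * basisShare W f T i

section BasisShare

variable {W : Finset N → ℝ} {f : N → Finset N → ℝ}

lemma basisShare_eq (T : Finset N) (i : N) :
    basisShare W f T i = (coeff W T)⁻¹ * residual W f T i := by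
  rw [basisShare, residual,
    sum_attach ((suppIn W T).erase T) fun T' => coeff W T' * basisShare W f T' i]

lemma coeff_mul_basisShare {T : Finset N} (hT : T ∈ supp W) (i : N) :
    coeff W T * basisShare W f T i = residual W f T i := by
  rw [basisShare_eq, mul_inv_cancel_left₀ (mem_supp.1 hT)]

lemma basisShare_eq_zero_of_notMem (hdist : DistRule f) {T : Finset N} {i : N} (hi : i ∉ T) :
    basisShare W f T i = 0 := by
  induction T using Finset.strongInduction with
  | H T ih =>
    rw [basisShare_eq, residual, hdist i T hi, zero_sub, sum_eq_zero fun T' hT' => by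
      have hT'T := ssubset_of_mem_erase_suppIn hT'
      rw [ih T' hT'T fun h => hi (hT'T.subset h), mul_zero]]
    simp

lemma apply_eq_sum_basisShare_of_mem_supp {T : Finset N} (hT : T ∈ supp W) (i : N) :
    f i T = ∑ T' ∈ suppIn W T, coeff W T' * basisShare W f T' i := by
  rw [← add_sum_erase _ _ (mem_suppIn.2 ⟨hT, subset_rfl⟩), coeff_mul_basisShare hT, residual]
  ring

lemma sum_basisShare_of_subset (hdist : DistRule f) {T S : Finset N} (hTS : T ⊆ S) :
    ∑ i ∈ S, basisShare W f T i = ∑ i ∈ T, basisShare W f T i :=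
  (sum_subset hTS fun _ _ hi => basisShare_eq_zero_of_notMem hdist hi).symm

lemma sum_basisShare (hdist : DistRule f) (hbb : BudgetBalanced W f) {T : Finset N}
    (hT : T ∈ supp W) : ∑ i ∈ T, basisShare W f T i = 1 := by
  induction T using Finset.strongInduction with
  | H T ih =>
    have hT' : T ∈ suppIn W T := mem_suppIn.2 ⟨hT, subset_rfl⟩
    have hW : ∑ T' ∈ suppIn W T, coeff W T' * ∑ i ∈ T, basisShare W f T' i = W T := by
      simp_rw [mul_sum]
      rw [sum_comm, ← hbb T]
      exact sum_congr rfl fun i _ => (apply_eq_sum_basisShare_of_mem_supp hT i).symm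
    have hsmaller : ∑ T' ∈ (suppIn W T).erase T, coeff W T' * ∑ i ∈ T, basisShare W f T' i
        = ∑ T' ∈ (suppIn W T).erase T, coeff W T' := sum_congr rfl fun T' hT' => by
      have hT'T := ssubset_of_mem_erase_suppIn hT'
      rw [sum_basisShare_of_subset hdist hT'T.subset,
        ih T' hT'T (mem_suppIn.1 (mem_of_mem_erase hT')).1, mul_one]
    rw [← sum_suppIn_coeff W T, ← add_sum_erase _ _ hT', ← add_sum_erase _ _ hT', hsmaller] at hW
    exact mul_left_cancel₀ (mem_supp.1 hT) (by linarith)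

lemma interaction_eq_residual (hdist : DistRule f) {i j : N} {C₀ : Finset N} (hij : i ≠ j)
    (hi : i ∉ C₀) (hj : j ∉ C₀)
    (ih : ∀ S ⊂ insert i (insert j C₀), ∀ u,
      f u S = ∑ T ∈ suppIn W S, coeff W T * basisShare W f T u) :
    interaction i j C₀ (f i) = residual W f (insert i (insert j C₀)) i := by
  set O := insert i (insert j C₀)
  set g : Finset N → ℝ :=
    ∑ T ∈ (suppIn W O).erase O, (coeff W T * basisShare W f T i) • unanimity T with hg_def
  have hg : ∀ S, g S =
      ∑ T ∈ ((suppIn W O).erase O).filter (· ⊆ S), coeff W T * basisShare W f T i := by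
    intro S
    simp only [hg_def, Finset.sum_apply, Pi.smul_apply, smul_eq_mul, unanimity, mul_ite, mul_one,
      mul_zero, sum_filter]
  have hfg : ∀ S ⊂ O, (f i - g) S = 0 := by
    intro S hS
    have hfilter : ((suppIn W O).erase O).filter (· ⊆ S) = suppIn W S := by
      ext T
      simp only [mem_filter, mem_erase, mem_suppIn]
      exact ⟨fun h => ⟨h.1.2.1, h.2⟩, fun h =>
        ⟨⟨fun hTO => not_subset_of_ssubset hS (hTO ▸ h.2), h.1, h.2.trans hS.subset⟩, h.2⟩⟩
    rw [Pi.sub_apply, hg, hfilter, ih S hS i, sub_self]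
  have hg_zero : interaction i j C₀ g = 0 := by
    rw [hg_def, map_sum]
    refine sum_eq_zero fun T hT => ?_
    rw [map_smul, smul_eq_mul]
    by_cases hiT : i ∈ T
    · rw [interaction_unanimity hij hi hj hiT (mem_suppIn.1 (mem_of_mem_erase hT)).2,
        if_neg (ne_of_mem_erase hT), mul_zero]
    · rw [basisShare_eq_zero_of_notMem hdist hiT, mul_zero, zero_mul]
  calc interaction i j C₀ (f i) = interaction i j C₀ g + interaction i j C₀ (f i - g) := by
        rw [← map_add, add_sub_cancel]
    _ = f i O - g O := by
        rw [hg_zero, zero_add, interaction_eq_apply_of_ssubset_eq_zero hij hi hj hfg, Pi.sub_apply]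
    _ = residual W f O i := by
        rw [hg, filter_true_of_mem fun T hT => (mem_suppIn.1 (mem_of_mem_erase hT)).2, residual]

end BasisShare

section Pennies

variable (i j : N) (C₀ : Finset N) (σ : Finset N → Bool)

/-- On every resource `(C, b)` with `C ⊆ C₀`, player `i` (choosing `s`) and player `j` (choosing
`t`) play matching pennies, with `j`'s sides swapped where `σ C`; every other player `u` sits on
all resources `(C, b)` with `u ∈ C`. -/
def penniesProfile (s t : Bool) (u : N) : Finset (Finset N × Bool) :=
  if u = i then C₀.powerset.image (·, s)
  else if u = j then C₀.powerset.image fun C => (C, xor (σ C) t)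
  else C₀.powerset.filter (u ∈ ·) ×ˢ univ

abbrev penniesGame (W : Finset N → ℝ) : Game N where
  R := Finset N × Bool
  act u := univ.image fun st : Bool × Bool => penniesProfile i j C₀ σ st.1 st.2 u
  act_nonempty _ := by simp
  Wr _ := W

variable {i j C₀} {W : Finset N → ℝ}

lemma eq_penniesProfile_of_mem_act {a : N → Finset (Finset N × Bool)}
    (ha : ∀ u, a u ∈ (penniesGame i j C₀ σ W).act u) :
    ∃ s t, a = penniesProfile i j C₀ σ s t := by
  obtain ⟨⟨s, _⟩, -, hs⟩ := mem_image.1 (ha i)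
  obtain ⟨⟨_, t⟩, -, ht⟩ := mem_image.1 (ha j)
  refine ⟨s, t, funext fun u => ?_⟩
  obtain ⟨_, -, hu⟩ := mem_image.1 (ha u)
  by_cases hui : u = i
  · subst hui
    rw [← hs]
    simp [penniesProfile]
  by_cases huj : u = j
  · subst huj
    rw [← ht]
    simp [penniesProfile, hui]
  rw [← hu]
  simp [penniesProfile, hui, huj]

lemma mem_playersAt_penniesProfile (hij : i ≠ j) (hi : i ∉ C₀) (hj : j ∉ C₀) (s t : Bool)
    {C : Finset N} (hC : C ⊆ C₀) (b : Bool) (u : N) :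
    u ∈ playersAt (G := penniesGame i j C₀ σ W) (penniesProfile i j C₀ σ s t) (C, b) ↔
      (u = i ∧ b = s) ∨ (u = j ∧ b = xor (σ C) t) ∨ u ∈ C := by
  simp only [playersAt, mem_filter, mem_univ, true_and]
  by_cases hui : u = i
  · subst hui
    have huC : u ∉ C := fun h => hi (hC h)
    simp [penniesProfile, hij, hC, huC, eq_comm]
  by_cases huj : u = j
  · subst huj
    have huC : u ∉ C := fun h => hj (hC h)
    simp [penniesProfile, Ne.symm hij, hC, huC, eq_comm]
  simp [penniesProfile, hui, huj, hC]

lemma utility_penniesProfile_left (hij : i ≠ j) (hi : i ∉ C₀) (hj : j ∉ C₀)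
    (f : N → Finset N → ℝ) (s t : Bool) :
    utility (penniesGame i j C₀ σ W) (fun _ => f) (penniesProfile i j C₀ σ s t) i =
      ∑ C ∈ C₀.powerset,
        f i (if xor (σ C) t = s then insert i (insert j C) else insert i C) := by
  rw [utility, penniesProfile, if_pos rfl, sum_image fun _ _ _ _ h => (Prod.mk.inj h).1]
  refine sum_congr rfl fun C hC => congrArg (f i) (ext fun u => ?_)
  rw [mem_playersAt_penniesProfile σ hij hi hj s t (mem_powerset.1 hC)]
  split_ifs <;> simp only [mem_insert] <;> grind

lemma utility_penniesProfile_right (hij : i ≠ j) (hi : i ∉ C₀) (hj : j ∉ C₀)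
    (f : N → Finset N → ℝ) (s t : Bool) :
    utility (penniesGame i j C₀ σ W) (fun _ => f) (penniesProfile i j C₀ σ s t) j =
      ∑ C ∈ C₀.powerset,
        f j (if xor (σ C) t = s then insert j (insert i C) else insert j C) := by
  rw [utility, penniesProfile, if_neg (Ne.symm hij), if_pos rfl,
    sum_image fun _ _ _ _ h => (Prod.mk.inj h).1]
  refine sum_congr rfl fun C hC => congrArg (f j) (ext fun u => ?_)
  rw [mem_playersAt_penniesProfile σ hij hi hj s t (mem_powerset.1 hC)]
  split_ifs <;> simp only [mem_insert] <;> grind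

lemma mul_nonneg_of_guaranteesPNE1 {f : N → Finset N → ℝ} (hPNE : GuaranteesPNE1 W f)
    (hij : i ≠ j) (hi : i ∉ C₀) (hj : j ∉ C₀) {ε : Finset N → ℝ}
    (hε : ∀ C, ε C = 1 ∨ ε C = -1) :
    0 ≤ (∑ C ∈ C₀.powerset, ε C * (f i (insert i (insert j C)) - f i (insert i C))) *
      ∑ C ∈ C₀.powerset, ε C * (f j (insert j (insert i C)) - f j (insert j C)) := by
  set σ : Finset N → Bool := fun C => decide (ε C = -1)
  obtain ⟨a, ha, hbest⟩ := hPNE (penniesGame i j C₀ σ W) fun _ => rfl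
  obtain ⟨s, t, rfl⟩ := eq_penniesProfile_of_mem_act σ ha
  have hne : (1 : ℝ) ≠ -1 := by norm_num
  -- Both deviations from `(s, t)` change the deviator's payoff by `c` times its signed sum.
  set c : ℝ := if xor s t then -1 else 1
  have hI : 0 ≤ c * ∑ C ∈ C₀.powerset,
      ε C * (f i (insert i (insert j C)) - f i (insert i C)) := by
    have hdev := hbest i _ (mem_image_of_mem _ (mem_univ (!s, t)))
    rw [Function.update_eq_iff.2 ⟨rfl, fun u hu => by simp [penniesProfile, hu]⟩,
      utility_penniesProfile_left σ hij hi hj, utility_penniesProfile_left σ hij hi hj,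
      ← sub_nonneg, ← sum_sub_distrib] at hdev
    rw [mul_sum]
    refine hdev.trans_eq (sum_congr rfl fun C _ => ?_)
    rcases hε C with h | h <;> cases s <;> cases t <;> simp [σ, c, h, hne]
  have hJ : 0 ≤ c * ∑ C ∈ C₀.powerset,
      ε C * (f j (insert j (insert i C)) - f j (insert j C)) := by
    have hdev := hbest j _ (mem_image_of_mem _ (mem_univ (s, !t)))
    rw [Function.update_eq_iff.2 ⟨rfl, fun u hu => by simp [penniesProfile, hu]⟩,
      utility_penniesProfile_right σ hij hi hj, utility_penniesProfile_right σ hij hi hj,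
      ← sub_nonneg, ← sum_sub_distrib] at hdev
    rw [mul_sum]
    refine hdev.trans_eq (sum_congr rfl fun C _ => ?_)
    rcases hε C with h | h <;> cases s <;> cases t <;> simp [σ, c, h, hne]
  have hc : c * c = 1 := by simp only [c]; split_ifs <;> norm_num
  nlinarith [mul_nonneg hI hJ]

end Pennies

section Decomposition

variable {W : Finset N → ℝ} {f : N → Finset N → ℝ}

lemma residual_mul_nonneg (hdist : DistRule f) (hPNE : GuaranteesPNE1 W f) {O : Finset N}
    (ih : ∀ S ⊂ O, ∀ u, f u S = ∑ T ∈ suppIn W S, coeff W T * basisShare W f T u)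
    {i j : N} (hi : i ∈ O) (hj : j ∈ O) (hij : i ≠ j) :
    0 ≤ residual W f O i * residual W f O j := by
  set C₀ := O \ {i, j}
  have hiC₀ : i ∉ C₀ := by simp [C₀]
  have hjC₀ : j ∉ C₀ := by simp [C₀]
  have hO : insert i (insert j C₀) = O := by
    ext u
    by_cases hui : u = i <;> by_cases huj : u = j <;> simp [C₀, hui, huj, hi, hj]
  have hO' : insert j (insert i C₀) = O := by rw [insert_comm, hO]
  have key := mul_nonneg_of_guaranteesPNE1 (W := W) hPNE hij hiC₀ hjC₀
    (ε := fun C => (-1 : ℝ) ^ #(C₀ \ C)) fun _ => neg_one_pow_eq_or ℝ _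
  rwa [← interaction_apply i j C₀ (f i), ← interaction_apply j i C₀ (f j),
    interaction_eq_residual hdist hij hiC₀ hjC₀ (hO ▸ ih),
    interaction_eq_residual hdist (Ne.symm hij) hjC₀ hiC₀ (hO' ▸ ih), hO, hO'] at key

lemma sum_residual (hdist : DistRule f) (hbb : BudgetBalanced W f) (O : Finset N) :
    ∑ v ∈ O, residual W f O v = W O - ∑ T ∈ (suppIn W O).erase O, coeff W T := by
  simp only [residual]
  rw [sum_sub_distrib, hbb, sum_comm]
  congr 1
  refine sum_congr rfl fun T hT => ?_
  have hT' := mem_suppIn.1 (mem_of_mem_erase hT)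
  rw [← mul_sum, sum_basisShare_of_subset hdist hT'.2, sum_basisShare hdist hbb hT'.1, mul_one]

theorem apply_eq_sum_basisShare (hdist : DistRule f) (hbb : BudgetBalanced W f)
    (hPNE : GuaranteesPNE1 W f) (S : Finset N) (u : N) :
    f u S = ∑ T ∈ suppIn W S, coeff W T * basisShare W f T u := by
  induction S using Finset.strongInduction generalizing u with
  | H O ih =>
    by_cases hO : O ∈ supp W
    · exact apply_eq_sum_basisShare_of_mem_supp hO u
    have herase : (suppIn W O).erase O = suppIn W O :=
      erase_eq_of_notMem fun h => hO (mem_suppIn.1 h).1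
    suffices residual W f O u = 0 by rwa [residual, herase, sub_eq_zero] at this
    by_cases huO : u ∈ O
    · refine eq_zero_of_pairwise_mul_nonneg
        (fun a ha b hb hab => residual_mul_nonneg hdist hPNE ih ha hb hab) ?_ huO
      rw [sum_residual hdist hbb, herase, sum_suppIn_coeff, sub_self]
    · rw [residual, hdist u O huO, zero_sub, neg_eq_zero]
      refine sum_eq_zero fun T hT => ?_
      have hTO := (mem_suppIn.1 (mem_of_mem_erase hT)).2
      rw [basisShare_eq_zero_of_notMem hdist fun h => huO (hTO h), mul_zero]

theorem basisShare_nonneg (hdist : DistRule f) (hbb : BudgetBalanced W f)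
    (hPNE : GuaranteesPNE1 W f) {T : Finset N} (hT : T ∈ supp W) (u : N) :
    0 ≤ basisShare W f T u := by
  by_cases huT : u ∈ T
  · refine nonneg_of_pairwise_mul_nonneg (fun a ha b hb hab => ?_)
      (by rw [sum_basisShare hdist hbb hT]; exact zero_le_one) huT
    have key := residual_mul_nonneg hdist hPNE
      (fun S _ => apply_eq_sum_basisShare hdist hbb hPNE S) ha hb hab
    rw [← coeff_mul_basisShare hT, ← coeff_mul_basisShare hT, mul_mul_mul_comm] at key
    exact nonneg_of_mul_nonneg_right key (mul_self_pos.2 (mem_supp.1 hT))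
  · rw [basisShare_eq_zero_of_notMem hdist huT]

end Decomposition

noncomputable instance : Inhabited (WeightSystem N) :=
  ⟨{ lam := fun _ => 1
     lam_pos := fun _ => one_pos
     m := Fintype.card N
     part := fun k => {(Fintype.equivFin N).symm k}
     part_nonempty := fun _ => singleton_nonempty _
     part_disjoint := fun _ _ hkl => disjoint_singleton.2 fun h => hkl (by simpa using h)
     part_covers := fun i => ⟨Fintype.equivFin N i, by simp⟩ }⟩

/-- The players with positive `w i` form the first block, with weights `w i`; the others form a
second block (present only if nonempty), with weight `1`. -/
noncomputable def WeightSystem.ofWeights (w : N → ℝ) (hw : ∃ i, 0 < w i) : WeightSystem N where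
  lam i := if 0 < w i then w i else 1
  lam_pos i := by
    split_ifs with h
    exacts [h, one_pos]
  m := if ∃ i, ¬0 < w i then 2 else 1
  part k := univ.filter fun i => (0 < w i ↔ k.val = 0)
  part_nonempty k := by
    by_cases hk : k.val = 0
    · obtain ⟨i, hi⟩ := hw
      exact ⟨i, by simp [hk, hi]⟩
    · have hm := k.isLt
      split_ifs at hm with h
      · obtain ⟨i, hi⟩ := h
        exact ⟨i, by simpa [hk] using hi⟩
      · omega
  part_disjoint k l hkl := by
    refine disjoint_left.2 fun i hik hil => hkl (Fin.ext ?_)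
    simp only [mem_filter, mem_univ, true_and] at hik hil
    have hkl' : k.val = 0 ↔ l.val = 0 := hik.symm.trans hil
    have hm : (if ∃ i, ¬0 < w i then 2 else 1) ≤ 2 := by split_ifs <;> omega
    omega
  part_covers i := by
    by_cases hi : 0 < w i
    · exact ⟨⟨0, by split_ifs <;> omega⟩, by simp [hi]⟩
    · exact ⟨⟨1, by rw [if_pos ⟨i, hi⟩]; omega⟩, by simpa using hi⟩

namespace WeightSystem

variable {w : N → ℝ} {hw : ∃ i, 0 < w i}

lemma ofWeights_idx_eq_zero_iff (i : N) : ((ofWeights w hw).idx i).val = 0 ↔ 0 < w i := by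
  have h : i ∈ (ofWeights w hw).part ((ofWeights w hw).idx i) :=
    ((ofWeights w hw).part_covers i).choose_spec
  simp only [ofWeights, mem_filter, mem_univ, true_and] at h
  exact h.symm

lemma mem_bar_ofWeights {T : Finset N} (hT : ∀ i, 0 < w i → i ∈ T) (i : N) :
    i ∈ (ofWeights w hw).bar T ↔ 0 < w i := by
  rw [bar, mem_filter, ← ofWeights_idx_eq_zero_iff (hw := hw)]
  constructor
  · rintro ⟨-, hmin⟩
    obtain ⟨j, hj⟩ := id hw
    have := hmin j (hT j hj)
    rw [Fin.le_def, (ofWeights_idx_eq_zero_iff j).2 hj] at this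
    omega
  · intro hi
    refine ⟨hT i ((ofWeights_idx_eq_zero_iff i).1 hi), fun j _ => ?_⟩
    rw [Fin.le_def, hi]
    exact Nat.zero_le _

end WeightSystem

lemma fGWSVbasis_ofWeights {w : N → ℝ} (hw : ∃ i, 0 < w i) (hw₀ : ∀ i, 0 ≤ w i)
    {T : Finset N} (hwT : ∀ i ∉ T, w i = 0) (hsum : ∑ i ∈ T, w i = 1) (i : N) (S : Finset N) :
    fGWSVbasis (.ofWeights w hw) T i S = if T ⊆ S then w i else 0 := by
  have hT : ∀ i, 0 < w i → i ∈ T := fun i hi => by_contra fun h => hi.ne' (hwT i h)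
  have hlam : ∀ j, (WeightSystem.ofWeights w hw).lam j = if 0 < w j then w j else 1 :=
    fun _ => rfl
  have hden : ∑ j ∈ (WeightSystem.ofWeights w hw).bar T,
      (WeightSystem.ofWeights w hw).lam j = 1 := by
    have hbar : (WeightSystem.ofWeights w hw).bar T = T.filter (0 < w ·) := by
      ext j
      rw [WeightSystem.mem_bar_ofWeights hT, mem_filter]
      exact ⟨fun h => ⟨hT j h, h⟩, And.right⟩
    rw [hbar, sum_filter, ← hsum]
    refine sum_congr rfl fun j _ => ?_
    rw [hlam]
    split_ifs with h
    · rfl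
    · exact (hw₀ j).antisymm (not_lt.1 h)
  simp only [fGWSVbasis, hden, div_one, WeightSystem.mem_bar_ofWeights hT]
  by_cases hi : 0 < w i
  · simp [hi, hlam]
  · simp [(hw₀ i).antisymm (not_lt.1 hi)]

theorem decomposition_into_gwsv_basis_general (N : Type) [Fintype N] [DecidableEq N]
    (W : Finset N → ℝ) (f : N → Finset N → ℝ)
    (hdist : DistRule f) (hbb : BudgetBalanced W f)
    (hPNE : GuaranteesPNE1 W f) :
    ∃ ωf : Finset N → WeightSystem N,
      ∀ (i : N) (S : Finset N),
        f i S = ∑ T ∈ supp W, coeff W T * fGWSVbasis (ωf T) T i S := by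
  refine ⟨fun T => if hw : ∃ i, 0 < basisShare W f T i then .ofWeights _ hw else default,
    fun i S => ?_⟩
  rw [apply_eq_sum_basisShare hdist hbb hPNE S i, suppIn, sum_filter]
  refine sum_congr rfl fun T hT => ?_
  dsimp only
  have hnonneg := basisShare_nonneg hdist hbb hPNE hT
  have hsum := sum_basisShare hdist hbb hT
  have hpos : ∃ i, 0 < basisShare W f T i := by
    by_contra! h
    linarith [sum_nonpos fun i (_ : i ∈ T) => h i]
  rw [dif_pos hpos, fGWSVbasis_ofWeights hpos hnonneg
    (fun _ => basisShare_eq_zero_of_notMem hdist) hsum, mul_ite, mul_zero]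

/-- **Proposition (decomposition).** A budget-balanced distribution rule `f` for
`W = (𝒯, Q)` that guarantees a pure Nash equilibrium in all games in
`G(N, f, W)` decomposes as `f = ∑_{T∈𝒯} q_T · f^T_{GWSV}[ω^T]` for some
sequence of weight systems `{ω^T}_{T∈𝒯}`. -/
theorem decomposition_into_gwsv_basis (N : Type) [Fintype N] [DecidableEq N]
    (hN : 1 < Fintype.card N)
    (W : Finset N → ℝ) (f : N → Finset N → ℝ)
    (hW0 : W ∅ = 0) (hdist : DistRule f) (hbb : BudgetBalanced W f)
    (hPNE : GuaranteesPNE1 W f) :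
    ∃ ωf : Finset N → WeightSystem N,
      ∀ (i : N) (S : Finset N),
        f i S = ∑ T ∈ supp W, coeff W T * fGWSVbasis (ωf T) T i S :=
  decomposition_into_gwsv_basis_general N W f hdist hbb hPNE

end CostSharing
end
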